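/- Let ω₃' ⊆ ℝ⁴ be the convex cone generated by (0,0,0,1), (0,1,0,0), (0,2,3,0), (1,0,0,−1), (1,1,3,0), and let S₃' = ω₃' ∩ ℤ⁴. Then the Hilbert basis of S₃' is {f'₁, f'₂, f'₃, f'₄, f'₅, f'₆, f'₇}, where f'₁=(0,0,0,1), f'₂=(0,1,0,0), f'₃=(0,2,3,0), f'₄=(1,0,0,−1), f'₅=(1,1,3,0), f'₆=(0,1,1,0), f'₇=(1,1,2,0); that is, every element of S₃' is an ℕ-linear combination of f'₁, …, f'₇, and no f'ᵢ (1 ≤ i ≤ 7) can be written as a sum of two nonzero elements of S₃'. -/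

import Mathlib

/-- The seven lattice points `f'₁, …, f'₇` (0-indexed as `f' 0, …, f' 6`). -/
def f' : Fin 7 → (Fin 4 → ℤ) :=
  ![![0,0,0,1], ![0,1,0,0], ![0,2,3,0], ![1,0,0,-1], ![1,1,3,0],
    ![0,1,1,0], ![1,1,2,0]]

/-- Coercion of an integer vector to a real vector. -/
def toR (v : Fin 4 → ℤ) : Fin 4 → ℝ := fun j => (v j : ℝ)

/-- The convex cone generated by a finite family of vectors in `ℝ⁴`. -/
def cone {n : ℕ} (v : Fin n → (Fin 4 → ℝ)) : Set (Fin 4 → ℝ) :=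
  {x | ∃ lam : Fin n → ℝ, (∀ i, 0 ≤ lam i) ∧ x = ∑ i, lam i • v i}

/-- The cone `ω₃'` generated by `f'₁, …, f'₅`. -/
def ω₃' : Set (Fin 4 → ℝ) := cone (fun i : Fin 5 => toR (f' (Fin.castLE (by norm_num) i)))

/-- The semigroup `S₃' = ω₃' ∩ ℤ⁴`. -/
def S₃' : Set (Fin 4 → ℤ) := {v | toR v ∈ ω₃'}


/-!
In coordinates `(x, y, z, w)` the cone `ω₃'` lies in the half-spaces `x ≥ 0`, `z ≥ 0`, `z ≤ 3y`,
`x + w ≥ 0`, `2z ≤ 3(x + y)` and `2z ≤ 3(x + y + w)`, since each of these functionals is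
nonnegative on the five generators. Given a lattice point satisfying them, removing `w⁺` copies
of `f'₁` and `w⁻` copies of `f'₄` leaves the point `(min(x, x + w), y, z, 0)`, which is written
explicitly as an `ℕ`-combination according to the sign of `2z − 3y` and residues mod 3.
Irreducibility of each `f'ᵢ` is then a small integer problem on the half-space inequalities of
the two summands.
-/

lemma dotProduct_nonneg_of_mem_cone {n : ℕ} {v : Fin n → Fin 4 → ℝ} {a x : Fin 4 → ℝ}
    (ha : ∀ i, 0 ≤ a ⬝ᵥ v i) (hx : x ∈ cone v) : 0 ≤ a ⬝ᵥ x := by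
  obtain ⟨lam, hlam, rfl⟩ := hx
  rw [dotProduct_sum]
  exact Finset.sum_nonneg fun i _ => by
    rw [dotProduct_smul, smul_eq_mul]
    exact mul_nonneg (hlam i) (ha i)

lemma mem_cone_self {n : ℕ} (v : Fin n → Fin 4 → ℝ) (i : Fin n) : v i ∈ cone v :=
  ⟨Pi.single i 1, fun j => by by_cases h : j = i <;> simp [h], by simp [Pi.single_apply]⟩

lemma dotProduct_nonneg_of_mem_S₃' {v : Fin 4 → ℤ} (hv : v ∈ S₃') (a : Fin 4 → ℤ)
    (ha : ∀ i : Fin 5, 0 ≤ a ⬝ᵥ f' (Fin.castLE (by norm_num) i)) : 0 ≤ a ⬝ᵥ v := by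
  have hcast (u : Fin 4 → ℤ) : toR a ⬝ᵥ toR u = ((a ⬝ᵥ u : ℤ) : ℝ) :=
    ((Int.castRingHom ℝ).map_dotProduct a u).symm
  have h := dotProduct_nonneg_of_mem_cone (a := toR a)
    (fun i => by rw [hcast]; exact_mod_cast ha i) hv
  rw [hcast] at h
  exact_mod_cast h

lemma facets_of_mem_S₃' {v : Fin 4 → ℤ} (hv : v ∈ S₃') :
    0 ≤ v 0 ∧ 0 ≤ v 2 ∧ v 2 ≤ 3 * v 1 ∧ 0 ≤ v 0 + v 3 ∧
      2 * v 2 ≤ 3 * (v 0 + v 1) ∧ 2 * v 2 ≤ 3 * (v 0 + v 1 + v 3) := by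
  have h := dotProduct_nonneg_of_mem_S₃' hv
  have h₁ := h ![1, 0, 0, 0] (by decide)
  have h₂ := h ![0, 0, 1, 0] (by decide)
  have h₃ := h ![0, 3, -1, 0] (by decide)
  have h₄ := h ![1, 0, 0, 1] (by decide)
  have h₅ := h ![3, 3, -2, 0] (by decide)
  have h₆ := h ![3, 3, -2, 3] (by decide)
  simp only [dotProduct, Fin.sum_univ_four, Matrix.cons_val] at h₁ h₂ h₃ h₄ h₅ h₆
  omega

lemma f'_mem_S₃' (i : Fin 7) : f' i ∈ S₃' := by
  by_cases hi : (i : ℕ) < 5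
  · exact mem_cone_self (fun j : Fin 5 => toR (f' (Fin.castLE (by norm_num) j))) ⟨i, hi⟩
  obtain rfl | rfl : i = 5 ∨ i = 6 := by omega
  · refine ⟨![0, 1/3, 1/3, 0, 0], by intro j; fin_cases j <;> norm_num, ?_⟩
    ext j
    fin_cases j <;> simp only [toR, f', Fin.sum_univ_five, Finset.sum_apply, Pi.smul_apply,
      smul_eq_mul, Matrix.cons_val, Fin.reduceFinMk, Fin.reduceCastLE]
    all_goals norm_num
  · refine ⟨![1/3, 1/3, 0, 1/3, 2/3], by intro j; fin_cases j <;> norm_num, ?_⟩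
    ext j
    fin_cases j <;> simp only [toR, f', Fin.sum_univ_five, Finset.sum_apply, Pi.smul_apply,
      smul_eq_mul, Matrix.cons_val, Fin.reduceFinMk, Fin.reduceCastLE]
    all_goals norm_num

lemma sum_nsmul_f' (c : Fin 7 → ℕ) : ∑ i, c i • f' i =
    ![(c 3 + c 4 + c 6 : ℤ), c 1 + 2 * c 2 + c 4 + c 5 + c 6, 3 * c 2 + 3 * c 4 + c 5 + 2 * c 6,
      (c 0 : ℤ) - c 3] := by
  ext j
  fin_cases j <;> simp only [Fin.sum_univ_seven, Finset.sum_apply, nsmul_eq_mul, Pi.mul_apply,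
    Pi.natCast_apply, f', Matrix.cons_val, Fin.reduceFinMk] <;> ring

lemma exists_nsmul_sum_eq_of_w_eq_zero {m y z : ℕ} (hzy : z ≤ 3 * y) (h : 2 * z ≤ 3 * (m + y)) :
    ∃ c : Fin 7 → ℕ, ![(m : ℤ), y, z, 0] = ∑ i, c i • f' i := by
  simp only [sum_nsmul_f', Matrix.vecCons_inj, and_true]
  rcases le_or_gt (2 * z) (3 * y) with hle | hgt
  · exact ⟨![m, y - 2 * (z / 3) - z % 3, z / 3, m, 0, z % 3, 0],
      by simp only [Matrix.cons_val]; omega⟩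
  -- `2z - 3y` is `0` on `f'₃`, `3` on `f'₅`, `1` on `f'₇` and `-1` on `f'₆`: its positive value is
  -- covered by copies of `f'₅` and one `f'₇` or `f'₆` according to its residue mod 3.
  obtain hd | hd | hd :
      (2 * z - 3 * y) % 3 = 0 ∨ (2 * z - 3 * y) % 3 = 1 ∨ (2 * z - 3 * y) % 3 = 2 := by omega
  · exact ⟨![m - (2 * z - 3 * y) / 3, 0, (3 * y - z) / 3, m - (2 * z - 3 * y) / 3,
      (2 * z - 3 * y) / 3, 0, 0], by simp only [Matrix.cons_val]; omega⟩
  · exact ⟨![m - (2 * z - 3 * y + 2) / 3, 0, (3 * y - z) / 3, m - (2 * z - 3 * y + 2) / 3,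
      (2 * z - 3 * y) / 3, 0, 1], by simp only [Matrix.cons_val]; omega⟩
  · exact ⟨![m - (2 * z - 3 * y + 1) / 3, 0, (3 * y - z) / 3, m - (2 * z - 3 * y + 1) / 3,
      (2 * z - 3 * y + 1) / 3, 1, 0], by simp only [Matrix.cons_val]; omega⟩

lemma exists_nsmul_sum_eq_of_mem_S₃' {v : Fin 4 → ℤ} (hv : v ∈ S₃') :
    ∃ c : Fin 7 → ℕ, v = ∑ i, c i • f' i := by
  obtain ⟨hx, hz, hzy, hxw, h₁, h₂⟩ := facets_of_mem_S₃' hv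
  obtain ⟨c, hc⟩ := exists_nsmul_sum_eq_of_w_eq_zero (m := (min (v 0) (v 0 + v 3)).toNat)
    (y := (v 1).toNat) (z := (v 2).toNat) (by omega) (by omega)
  refine ⟨![c 0 + (v 3).toNat, c 1, c 2, c 3 + (-v 3).toNat, c 4, c 5, c 6], ?_⟩
  rw [sum_nsmul_f'] at hc ⊢
  simp only [Matrix.vecCons_inj, and_true] at hc
  ext j
  fin_cases j <;> simp only [Fin.reduceFinMk, Matrix.cons_val] <;> omega

lemma eq_zero_or_eq_zero_of_f'_eq_add {i : Fin 7} {a b : Fin 4 → ℤ} (ha : a ∈ S₃')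
    (hb : b ∈ S₃') (h : f' i = a + b) : a = 0 ∨ b = 0 := by
  obtain ⟨a₁, a₂, a₃, a₄, a₅, a₆⟩ := facets_of_mem_S₃' ha
  obtain ⟨b₁, b₂, b₃, b₄, b₅, b₆⟩ := facets_of_mem_S₃' hb
  have h₀ := congrFun h 0
  have h₁ := congrFun h 1
  have h₂ := congrFun h 2
  have h₃ := congrFun h 3
  simp only [funext_iff, Fin.forall_fin_succ, IsEmpty.forall_iff, Pi.zero_apply, and_true,
    Fin.reduceSucc]
  fin_cases i <;> simp only [f', Fin.reduceFinMk, Matrix.cons_val, Pi.add_apply] at h₀ h₁ h₂ h₃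
  iterate 6 omega
  -- For `f'₇ = (1, 1, 2, 0)` one summand has `y = 0`, hence `z = 0`.
  rcases (show a 1 = 0 ∨ b 1 = 0 by omega) with h | h <;> omega

/-- The Hilbert basis of `S₃' = ω₃' ∩ ℤ⁴` is `{f'₁, …, f'₇}`, where
`f'₆=(0,1,1,0)` and `f'₇=(1,1,2,0)`. -/
theorem stmt_16 :
    (∀ i, f' i ∈ S₃') ∧
    (∀ v ∈ S₃', ∃ c : Fin 7 → ℕ, v = ∑ i, c i • f' i) ∧
    (∀ i : Fin 7, ¬ ∃ a ∈ S₃', ∃ b ∈ S₃', a ≠ 0 ∧ b ≠ 0 ∧ f' i = a + b) := by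
  refine ⟨f'_mem_S₃', fun v hv => exists_nsmul_sum_eq_of_mem_S₃' hv, ?_⟩
  rintro i ⟨a, ha, b, hb, ha₀, hb₀, h⟩
  exact (eq_zero_or_eq_zero_of_f'_eq_add ha hb h).elim ha₀ hb₀
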